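/- Let c = √(2·ln(10/9)). Let Δ > 0, η ∈ (0, 1], δ ∈ (0, 1), N ≥ 1, weights p_0, …, p_{N−1} ≥ 0 with Σ_j p_j = 1 and p_0 ≥ η, and energies E_0 < E_1 ≤ … ≤ E_{N−1} with E_j − E_0 ≥ Δ for all 1 ≤ j ≤ N−1. Suppose ε > 0 satisfies ε ≤ c·min(0.9·Δ/√(2·ln(9Δ/(ε·η))), 0.2·Δ), and set σ := min(0.9·Δ/√(2·ln(9Δ/(ε·η))), 0.2·Δ) and M := ⌈σ/ε⌉ + 1. Let (Ω, 𝔽, P) be a probability space, Ẽ_0 : Ω → ℝ a random variable with P(|Ẽ_0 − E_0| > σ/4) < δ/2, and h : Ω → (Fin M → ℂ) a random variable with P(∀ j ∈ {1, …, M}, |(g_σ∗p)(x_j) − h_j| ≤ 0.1·ε·η/(√(2π)·σ³)) ≥ 1 − δ/2, where x_j := Ẽ_0 − 0.25σ + (0.5σ/M)·(j − 1) for j ∈ {1, …, M}. Let J : Ω → {1, …, M} be any random variable such that |h_{J(ω)}(ω)| ≤ |h_j(ω)| for all j ∈ {1, …, M} and all ω ∈ Ω. Then P(|x_J − E_0|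 > ε) < δ. -/

import Mathlib

/-!
Off an event of probability less than `δ`, `|Ẽ₀ - E₀| ≤ σ/4` and every `h_j` is within
`τ = 0.1εη/(√(2π)σ³)` of `(g_σ ∗ p)(x_j)`, and the claim becomes deterministic. All grid points lie
within `σ/2` of `E₀`, so at distance at least `0.9Δ ≥ σ` from every excited energy, where `|g_σ|`
is decreasing; the choice of `σ` makes the excited part of `g_σ ∗ p` at most `τ` there. One grid
point lies within a grid step `< ε/2` of `E₀`, where the ground term is at most `p₀ ε/2` (in units
of `1/(√(2π)σ³)`). If `|x_J - E₀| > ε`, then, `|g_σ|` being increasing on `[0, σ]` and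
`ε ≤ √(2 ln(10/9)) σ`, the ground term at `x_J` is at least `0.9 p₀ ε`. Comparing both through the
minimality of `|h_J|` contradicts `η ≤ p₀`.
-/

open Real MeasureTheory

/-- The Gaussian derivative filter `g_σ(x) = −(1/(√(2π)·σ³))·x·exp(−x²/(2σ²))`. -/
noncomputable def gaussDerivFilter (σ x : ℝ) : ℝ :=
  -(1 / (Real.sqrt (2 * π) * σ ^ 3)) * x * Real.exp (-(x ^ 2) / (2 * σ ^ 2))

open Set

section GaussDerivFilter

variable {σ : ℝ}

lemma hasDerivAt_mul_exp_neg_sq_div (hσ : σ ≠ 0) (t : ℝ) :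
    HasDerivAt (fun t => t * exp (-t ^ 2 / (2 * σ ^ 2)))
      ((1 - t ^ 2 / σ ^ 2) * exp (-t ^ 2 / (2 * σ ^ 2))) t := by
  refine ((hasDerivAt_id' t).mul
    ((hasDerivAt_pow 2 t).neg.div_const (2 * σ ^ 2)).exp).congr_deriv ?_
  simp only [Pi.neg_apply]
  field_simp
  ring

lemma monotoneOn_mul_exp_neg_sq_div (hσ : 0 < σ) :
    MonotoneOn (fun t => t * exp (-t ^ 2 / (2 * σ ^ 2))) (Icc 0 σ) := by
  refine monotoneOn_of_hasDerivWithinAt_nonneg (convex_Icc 0 σ) (by fun_prop)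
    (fun t _ => (hasDerivAt_mul_exp_neg_sq_div hσ.ne' t).hasDerivWithinAt) fun t ht => ?_
  rw [interior_Icc] at ht
  have : t ^ 2 / σ ^ 2 ≤ 1 := by
    rw [div_le_one (by positivity)]
    nlinarith [ht.1, ht.2]
  exact mul_nonneg (by linarith) (exp_pos _).le

lemma antitoneOn_mul_exp_neg_sq_div (hσ : 0 < σ) :
    AntitoneOn (fun t => t * exp (-t ^ 2 / (2 * σ ^ 2))) (Ici σ) := by
  refine antitoneOn_of_hasDerivWithinAt_nonpos (convex_Ici σ) (by fun_prop)
    (fun t _ => (hasDerivAt_mul_exp_neg_sq_div hσ.ne' t).hasDerivWithinAt) fun t ht => ?_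
  rw [interior_Ici] at ht
  have : 1 ≤ t ^ 2 / σ ^ 2 := by
    rw [le_div_iff₀ (by positivity)]
    nlinarith [mem_Ioi.1 ht]
  exact mul_nonpos_of_nonpos_of_nonneg (by linarith) (exp_pos _).le

lemma abs_gaussDerivFilter (hσ : 0 < σ) (y : ℝ) :
    |gaussDerivFilter σ y| = |y| * exp (-|y| ^ 2 / (2 * σ ^ 2)) / (√(2 * π) * σ ^ 3) := by
  have hC : 0 < √(2 * π) * σ ^ 3 := by positivity
  rw [gaussDerivFilter, abs_mul, abs_mul, abs_neg, abs_of_pos (one_div_pos.2 hC),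
    abs_of_pos (exp_pos _), sq_abs]
  ring

lemma abs_gaussDerivFilter_le_div (hσ : 0 < σ) (y : ℝ) :
    |gaussDerivFilter σ y| ≤ |y| / (√(2 * π) * σ ^ 3) := by
  rw [abs_gaussDerivFilter hσ]
  gcongr
  refine mul_le_of_le_one_right (abs_nonneg y) (exp_le_one_iff.2 ?_)
  rw [neg_div]
  exact neg_nonpos.2 (by positivity)

lemma abs_gaussDerivFilter_le_of_le_abs {d y : ℝ} (hσ : 0 < σ) (hσd : σ ≤ d) (hdy : d ≤ |y|) :
    |gaussDerivFilter σ y| ≤ |gaussDerivFilter σ d| := by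
  rw [abs_gaussDerivFilter hσ, abs_gaussDerivFilter hσ, abs_of_nonneg (hσ.le.trans hσd)]
  gcongr ?_ / _
  exact antitoneOn_mul_exp_neg_sq_div hσ hσd (hσd.trans hdy) hdy

lemma abs_gaussDerivFilter_le_of_abs_le {e y : ℝ} (hσ : 0 < σ) (he : 0 ≤ e) (hey : e ≤ |y|)
    (hyσ : |y| ≤ σ) : |gaussDerivFilter σ e| ≤ |gaussDerivFilter σ y| := by
  rw [abs_gaussDerivFilter hσ, abs_gaussDerivFilter hσ, abs_of_nonneg he]
  gcongr ?_ / _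
  exact monotoneOn_mul_exp_neg_sq_div hσ ⟨he, hey.trans hyσ⟩ ⟨he.trans hey, hyσ⟩ hey

end GaussDerivFilter

section Parameters

variable {σ : ℝ}

lemma sq_div_le_of_le_sqrt_mul {a L : ℝ} (hσ : 0 < σ) (ha : 0 ≤ a) (hL : 0 ≤ L)
    (h : a ≤ √(2 * L) * σ) : a ^ 2 / (2 * σ ^ 2) ≤ L := by
  rw [div_le_iff₀ (by positivity)]
  have := pow_le_pow_left₀ ha h 2
  rw [mul_pow, sq_sqrt (by positivity)] at this
  linarith

lemma le_sq_div_of_le_div_sqrt {a L : ℝ} (hσ : 0 < σ) (h : σ ≤ a / √(2 * L)) :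
    L ≤ a ^ 2 / (2 * σ ^ 2) := by
  -- `a / 0 = 0`, so `0 < σ` forces the square root to be positive
  have hs : 0 < √(2 * L) := by
    refine (sqrt_nonneg _).lt_of_ne fun h0 => ?_
    rw [← h0, div_zero] at h
    linarith
  rw [le_div_iff₀ (by positivity)]
  have := pow_le_pow_left₀ (by positivity) ((le_div_iff₀ hs).1 h) 2
  rw [mul_pow, sq_sqrt (sqrt_pos.1 hs).le] at this
  linarith

lemma nine_div_ten_mul_le_abs_gaussDerivFilter {ε : ℝ} (hσ : 0 < σ) (hε : 0 ≤ ε)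
    (h : ε ≤ √(2 * log (10 / 9)) * σ) :
    0.9 * ε / (√(2 * π) * σ ^ 3) ≤ |gaussDerivFilter σ ε| := by
  rw [abs_gaussDerivFilter hσ, abs_of_nonneg hε]
  have hexp : 0.9 ≤ exp (-ε ^ 2 / (2 * σ ^ 2)) :=
    calc (0.9 : ℝ) = exp (-log (10 / 9)) := by rw [exp_neg, exp_log (by norm_num)]; norm_num
      _ ≤ _ := exp_le_exp.2 <| by
        rw [neg_div]
        exact neg_le_neg (sq_div_le_of_le_sqrt_mul hσ hε (log_nonneg (by norm_num)) h)
  gcongr ?_ / _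
  nlinarith

lemma abs_gaussDerivFilter_le_of_le_div_sqrt_log {Δ ε η : ℝ} (hΔ : 0 < Δ) (hε : 0 < ε)
    (hη : 0 < η) (hσ : 0 < σ) (h : σ ≤ 0.9 * Δ / √(2 * log (9 * Δ / (ε * η)))) :
    |gaussDerivFilter σ (0.9 * Δ)| ≤ 0.1 * ε * η / (√(2 * π) * σ ^ 3) := by
  rw [abs_gaussDerivFilter hσ, abs_of_pos (by positivity)]
  have hexp : exp (-(0.9 * Δ) ^ 2 / (2 * σ ^ 2)) ≤ ε * η / (9 * Δ) :=
    calc _ ≤ exp (-log (9 * Δ / (ε * η))) := exp_le_exp.2 <| by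
          rw [neg_div]
          exact neg_le_neg (le_sq_div_of_le_div_sqrt hσ h)
      _ = ε * η / (9 * Δ) := by rw [exp_neg, exp_log (by positivity), inv_div]
  gcongr ?_ / _
  calc _ ≤ 0.9 * Δ * (ε * η / (9 * Δ)) := by gcongr
    _ = 0.1 * ε * η := by field_simp; ring

end Parameters

/-- `(g_σ ∗ p)(x)` for the spectral measure `p = ∑ₖ pₖ δ_{Eₖ}`. -/
noncomputable def gaussDerivConv {ι : Type*} [Fintype ι] (σ : ℝ) (p E : ι → ℝ) (x : ℝ) : ℝ :=
  ∑ k, p k * gaussDerivFilter σ (x - E k)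

lemma abs_gaussDerivConv_sub_le {ι : Type*} [Fintype ι] [DecidableEq ι] {σ d x : ℝ}
    {p E : ι → ℝ} {i₀ : ι} (hσ : 0 < σ) (hp : ∀ k, 0 ≤ p k) (hσd : σ ≤ d)
    (hx : ∀ k ≠ i₀, d ≤ |x - E k|) :
    |gaussDerivConv σ p E x - p i₀ * gaussDerivFilter σ (x - E i₀)|
      ≤ (∑ k ∈ Finset.univ.erase i₀, p k) * |gaussDerivFilter σ d| := by
  rw [gaussDerivConv, ← Finset.add_sum_erase _ _ (Finset.mem_univ i₀), add_sub_cancel_left,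
    Finset.sum_mul]
  refine (Finset.abs_sum_le_sum_abs _ _).trans (Finset.sum_le_sum fun k hk => ?_)
  rw [abs_mul, abs_of_nonneg (hp k)]
  exact mul_le_mul_of_nonneg_left
    (abs_gaussDerivFilter_le_of_le_abs hσ hσd (hx k (Finset.ne_of_mem_erase hk))) (hp k)

lemma norm_le_norm_add_of_forall_norm_sub_le {α E : Type*} [SeminormedAddCommGroup E]
    {f g : α → E} {τ : ℝ} (hfg : ∀ j, ‖f j - g j‖ ≤ τ) {J : α} (hJ : ∀ j, ‖g J‖ ≤ ‖g j‖)
    (j : α) : ‖f J‖ ≤ ‖f j‖ + 2 * τ := by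
  have hJ' := norm_sub_norm_le (f J) (g J)
  have hj' := norm_sub_norm_le (g j) (f j)
  rw [norm_sub_rev] at hj'
  linarith [hfg J, hfg j, hJ j]

lemma abs_sub_le_of_forall_norm_le {ι α : Type*} [Fintype ι] {p E : ι → ℝ}
    {i₀ : ι} {x : α → ℝ} {h : α → ℂ} {J j₀ : α} {σ ε η d : ℝ} (hσ : 0 < σ)
    (hp : ∀ k, 0 ≤ p k) (hp₁ : ∑ k, p k = 1) (hη : 0 < η) (hηp : η ≤ p i₀) (hε : 0 < ε)
    (hgε : 0.9 * ε / (√(2 * π) * σ ^ 3) ≤ |gaussDerivFilter σ ε|) (hσd : σ ≤ d)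
    (hgd : |gaussDerivFilter σ d| ≤ 0.1 * ε * η / (√(2 * π) * σ ^ 3))
    (hgap : ∀ k ≠ i₀, d + σ / 2 ≤ E k - E i₀) (hx : ∀ j, |x j - E i₀| ≤ σ / 2)
    (hj₀ : |x j₀ - E i₀| < ε / 2)
    (hh : ∀ j, ‖(gaussDerivConv σ p E (x j) : ℂ) - h j‖ ≤ 0.1 * ε * η / (√(2 * π) * σ ^ 3))
    (hJ : ∀ j, ‖h J‖ ≤ ‖h j‖) : |x J - E i₀| ≤ ε := by
  classical
  by_contra! hfar
  set C := √(2 * π) * σ ^ 3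
  have hC : 0 < C := by positivity
  set u := ε / C
  have hu : 0 < u := div_pos hε hC
  rw [show 0.9 * ε / C = 0.9 * u by ring] at hgε
  rw [show 0.1 * ε * η / C = 0.1 * η * u by ring] at hgd hh
  have hp₀ : p i₀ ≤ 1 := hp₁ ▸ Finset.single_le_sum (fun k _ => hp k) (Finset.mem_univ i₀)
  have htail : ∀ j, |gaussDerivConv σ p E (x j) - p i₀ * gaussDerivFilter σ (x j - E i₀)|
      ≤ (1 - p i₀) * (0.1 * η * u) := fun j => by
    have hdist : ∀ k ≠ i₀, d ≤ |x j - E k| := fun k hk => by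
      rw [abs_sub_comm]
      linarith [hgap k hk, (abs_le.1 (hx j)).2, le_abs_self (E k - x j)]
    refine (abs_gaussDerivConv_sub_le hσ hp hσd hdist).trans ?_
    rw [Finset.sum_erase_eq_sub (Finset.mem_univ i₀), hp₁]
    exact mul_le_mul_of_nonneg_left hgd (by linarith)
  have hnear : |gaussDerivFilter σ (x j₀ - E i₀)| ≤ u / 2 :=
    (abs_gaussDerivFilter_le_div hσ _).trans ((div_le_div_of_nonneg_right hj₀.le hC.le).trans_eq
      (by ring))
  have hfar' : 0.9 * u ≤ |gaussDerivFilter σ (x J - E i₀)| :=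
    hgε.trans (abs_gaussDerivFilter_le_of_abs_le hσ hε.le hfar.le (by linarith [hx J]))
  have hcmp := norm_le_norm_add_of_forall_norm_sub_le hh hJ j₀
  simp only [Complex.norm_real, Real.norm_eq_abs] at hcmp
  have key : p i₀ * (0.9 * u) ≤ p i₀ * (u / 2) + 2 * (2 - p i₀) * (0.1 * η * u) := by
    have hJ' := abs_sub_abs_le_abs_sub (p i₀ * gaussDerivFilter σ (x J - E i₀))
      (gaussDerivConv σ p E (x J))
    have hj₀' := abs_sub_abs_le_abs_sub (gaussDerivConv σ p E (x j₀))
      (p i₀ * gaussDerivFilter σ (x j₀ - E i₀))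
    rw [abs_sub_comm] at hJ'
    rw [abs_mul, abs_of_nonneg (hp i₀)] at hJ' hj₀'
    nlinarith [htail J, htail j₀, mul_le_mul_of_nonneg_left hfar' (hp i₀),
      mul_le_mul_of_nonneg_left hnear (hp i₀)]
  have hp₀_pos : 0 < p i₀ := hη.trans_le hηp
  nlinarith [mul_le_mul_of_nonneg_right hηp (mul_nonneg (by linarith : 0 ≤ 2 - p i₀) hu.le),
    mul_pos (mul_pos hp₀_pos hp₀_pos) hu]

lemma exists_abs_grid_sub_le {M : ℕ} {a b r s : ℝ} (hM : 0 < M) (hs : 0 < s)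
    (hsM : s * M = 2 * r) (hab : |a - b| ≤ r) : ∃ j : Fin M, |a - r + s * j - b| ≤ s := by
  obtain ⟨hab₁, hab₂⟩ := abs_le.1 hab
  set u := (b - a + r) / s
  have hu₀ : 0 ≤ u := div_nonneg (by linarith) hs.le
  have huM : u ≤ M := by rw [div_le_iff₀ hs]; linarith
  set j := min ⌊u⌋₊ (M - 1) with hj
  refine ⟨⟨j, by omega⟩, ?_⟩
  have hj_le : (j : ℝ) ≤ u := (Nat.cast_le.2 (min_le_left _ _)).trans (Nat.floor_le hu₀)
  have hle_j : u ≤ j + 1 := by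
    have : ((j + 1 : ℕ) : ℝ) = min ((⌊u⌋₊ + 1 : ℕ) : ℝ) M := by
      rw [← Nat.cast_min]; congr 1; omega
    rw [← Nat.cast_add_one, this]
    exact le_min (by exact_mod_cast (Nat.lt_floor_add_one u).le) huM
  rw [le_div_iff₀ hs] at hj_le
  rw [div_le_iff₀ hs] at hle_j
  rw [abs_le]
  constructor <;> linarith

lemma div_natCeil_div_add_one_lt (σ : ℝ) {ε : ℝ} (hε : 0 < ε) :
    σ / (⌈σ / ε⌉₊ + 1) < ε := by
  rw [div_lt_iff₀ (by positivity)]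
  nlinarith [Nat.le_ceil (σ / ε), div_mul_cancel₀ σ hε.ne']

lemma abs_grid_sub_le {M : ℕ} {a b r s : ℝ} (hs : 0 ≤ s) (hsM : s * M = 2 * r)
    (hab : |a - b| ≤ r) (j : Fin M) : |a - r + s * j - b| ≤ 2 * r := by
  have hj : s * j ≤ 2 * r := hsM ▸ mul_le_mul_of_nonneg_left (by exact_mod_cast j.isLt.le) hs
  have : 0 ≤ s * j := by positivity
  rw [abs_le] at hab ⊢
  constructor <;> linarith [hab.1, hab.2]

lemma MeasureTheory.measure_lt_add_of_inter_subset_compl {Ω : Type*} [MeasurableSpace Ω]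
    {P : Measure Ω} [IsProbabilityMeasure P] {A B G : Set Ω} {a b : ENNReal}
    (hG : MeasurableSet G) (hA : P A < a) (hGb : 1 - b ≤ P G) (hB : Aᶜ ∩ G ⊆ Bᶜ) :
    P B < a + b := by
  have hGc : P Gᶜ ≤ b := by
    rw [prob_compl_eq_one_sub hG, tsub_le_iff_right]
    exact le_add_tsub.trans (by gcongr)
  have hBAG : B ⊆ A ∪ Gᶜ := compl_subset_compl.1 (by rwa [compl_union, compl_compl])
  calc P B ≤ P (A ∪ Gᶜ) := measure_mono hBAG
    _ ≤ P A + P Gᶜ := measure_union_le _ _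
    _ < a + b := ENNReal.add_lt_add_of_lt_of_le (measure_ne_top P _) hA hGc

theorem gaussDerivConv_gsee_probabilistic_general (Δ η δ : ℝ) (hΔ : 0 < Δ)
    (hη0 : 0 < η) (hδ0 : 0 < δ)
    (N : ℕ) (hN : 1 ≤ N) (p E : Fin N → ℝ)
    (hp_nonneg : ∀ j, 0 ≤ p j) (hp_sum : ∑ j, p j = 1) (hp0 : η ≤ p ⟨0, hN⟩)
    (hE_gap : ∀ j : Fin N, 1 ≤ j.val → Δ ≤ E j - E ⟨0, hN⟩)
    (ε : ℝ) (hε : 0 < ε)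
    (hε_small : ε ≤ Real.sqrt (2 * Real.log (10 / 9)) *
      min (0.9 * Δ / Real.sqrt (2 * Real.log (9 * Δ / (ε * η)))) (0.2 * Δ))
    (σ : ℝ)
    (hσ : σ = min (0.9 * Δ / Real.sqrt (2 * Real.log (9 * Δ / (ε * η)))) (0.2 * Δ))
    (M : ℕ) (hM : M = ⌈σ / ε⌉₊ + 1)
    (Ω : Type*) [MeasurableSpace Ω] (P : Measure Ω) [IsProbabilityMeasure P]
    (Etilde : Ω → ℝ) (hEtilde_meas : Measurable Etilde)
    (h : Ω → Fin M → ℂ) (hh_meas : Measurable h)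
    (hEtilde : P {ω | σ / 4 < |Etilde ω - E ⟨0, hN⟩|} < ENNReal.ofReal (δ / 2))
    (hh : 1 - ENNReal.ofReal (δ / 2) ≤
      P {ω | ∀ j : Fin M,
        ‖((↑(∑ k, p k * gaussDerivFilter σ
            (Etilde ω - 0.25 * σ + (0.5 * σ / M) * j.val - E k)) : ℂ) - h ω j)‖ ≤
          0.1 * ε * η / (Real.sqrt (2 * π) * σ ^ 3)})
    (J : Ω → Fin M)
    (hJ : ∀ ω : Ω, ∀ j : Fin M, ‖h ω (J ω)‖ ≤ ‖h ω j‖) :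
    P {ω | ε < |Etilde ω - 0.25 * σ + (0.5 * σ / M) * (J ω).val - E ⟨0, hN⟩|} <
      ENNReal.ofReal δ := by
  have hσ0 : 0 < σ := hσ ▸ pos_of_mul_pos_right (hε.trans_le hε_small) (sqrt_nonneg _)
  have hσΔ : σ ≤ 0.2 * Δ := hσ ▸ min_le_right _ _
  have hgε := nine_div_ten_mul_le_abs_gaussDerivFilter hσ0 hε.le (hσ ▸ hε_small)
  have hgΔ := abs_gaussDerivFilter_le_of_le_div_sqrt_log hΔ hε hη0 hσ0 (hσ ▸ min_le_left _ _)
  have hgap : ∀ k ≠ ⟨0, hN⟩, 0.9 * Δ + σ / 2 ≤ E k - E ⟨0, hN⟩ := fun k hk => by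
    linarith [hE_gap k (Nat.one_le_iff_ne_zero.2 fun h0 => hk (Fin.ext h0))]
  have hM0 : 0 < M := by omega
  have hsM : 0.5 * σ / M * M = 2 * (0.25 * σ) := by field_simp; ring
  have hsε : 0.5 * σ / M < ε / 2 := by
    rw [hM, mul_div_assoc]
    push_cast
    linarith [div_natCeil_div_add_one_lt σ hε]
  refine (measure_lt_add_of_inter_subset_compl ?_ hEtilde hh ?_).trans_eq ?_
  · unfold gaussDerivFilter
    measurability
  · rintro ω ⟨hfar, hacc⟩
    have hnear : |Etilde ω - E ⟨0, hN⟩| ≤ 0.25 * σ := by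
      rw [mem_compl_iff, mem_ofPred_eq, not_lt] at hfar
      linarith
    obtain ⟨j₀, hj₀⟩ := exists_abs_grid_sub_le hM0 (by positivity) hsM hnear
    exact (abs_sub_le_of_forall_norm_le hσ0 hp_nonneg hp_sum hη0 hp0 hε hgε
      (by linarith) hgΔ hgap (fun j => (abs_grid_sub_le (by positivity) hsM hnear j).trans_eq
      (by ring)) (hj₀.trans_lt hsε) hacc (hJ ω)).not_gt
  · rw [← ENNReal.ofReal_add (by positivity) (by positivity), add_halves]

/-- Probabilistic correctness of the ground state energy estimate: if the coarse estimate
`Ẽ₀` is `σ/4`-close to `E₀` except with probability `δ/2`, and the convolution estimates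
`h_j` at the grid points `x_j(ω) = Ẽ₀(ω) − 0.25σ + (0.5σ/M)(j−1)` are all
`0.1·ε·η/(√(2π)σ³)`-accurate with probability at least `1 − δ/2`, then any minimizer
`J` of `|h_j|` yields a grid point `x_J` that is `ε`-close to `E₀` except with
probability less than `δ`.  (The index `j : Fin M` represents `j − 1` for
`j ∈ {1, …, M}`.) -/
theorem gaussDerivConv_gsee_probabilistic (Δ η δ : ℝ) (hΔ : 0 < Δ)
    (hη0 : 0 < η) (hη1 : η ≤ 1) (hδ0 : 0 < δ) (hδ1 : δ < 1)
    (N : ℕ) (hN : 1 ≤ N) (p E : Fin N → ℝ)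
    (hp_nonneg : ∀ j, 0 ≤ p j) (hp_sum : ∑ j, p j = 1) (hp0 : η ≤ p ⟨0, hN⟩)
    (hE_lt : ∀ j : Fin N, 1 ≤ j.val → E ⟨0, hN⟩ < E j)
    (hE_chain : ∀ i j : Fin N, 1 ≤ i.val → i ≤ j → E i ≤ E j)
    (hE_gap : ∀ j : Fin N, 1 ≤ j.val → Δ ≤ E j - E ⟨0, hN⟩)
    (ε : ℝ) (hε : 0 < ε)
    (hε_small : ε ≤ Real.sqrt (2 * Real.log (10 / 9)) *
      min (0.9 * Δ / Real.sqrt (2 * Real.log (9 * Δ / (ε * η)))) (0.2 * Δ))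
    (σ : ℝ)
    (hσ : σ = min (0.9 * Δ / Real.sqrt (2 * Real.log (9 * Δ / (ε * η)))) (0.2 * Δ))
    (M : ℕ) (hM : M = ⌈σ / ε⌉₊ + 1)
    (Ω : Type*) [MeasurableSpace Ω] (P : Measure Ω) [IsProbabilityMeasure P]
    (Etilde : Ω → ℝ) (hEtilde_meas : Measurable Etilde)
    (h : Ω → Fin M → ℂ) (hh_meas : Measurable h)
    (hEtilde : P {ω | σ / 4 < |Etilde ω - E ⟨0, hN⟩|} < ENNReal.ofReal (δ / 2))
    (hh : 1 - ENNReal.ofReal (δ / 2) ≤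
      P {ω | ∀ j : Fin M,
        ‖((↑(∑ k, p k * gaussDerivFilter σ
            (Etilde ω - 0.25 * σ + (0.5 * σ / M) * j.val - E k)) : ℂ) - h ω j)‖ ≤
          0.1 * ε * η / (Real.sqrt (2 * π) * σ ^ 3)})
    (J : Ω → Fin M) (hJ_meas : Measurable J)
    (hJ : ∀ ω : Ω, ∀ j : Fin M, ‖h ω (J ω)‖ ≤ ‖h ω j‖) :
    P {ω | ε < |Etilde ω - 0.25 * σ + (0.5 * σ / M) * (J ω).val - E ⟨0, hN⟩|} <
      ENNReal.ofReal δ :=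
  gaussDerivConv_gsee_probabilistic_general Δ η δ hΔ hη0 hδ0 N hN p E hp_nonneg hp_sum hp0 hE_gap ε
    hε hε_small σ hσ M hM Ω P Etilde hEtilde_meas h hh_meas hEtilde hh J hJ
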